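/- arXiv:1111.1609 — 3 statements merged into one kernel-verified Lean document; each statement's English description precedes it below -/
import Mathlib

section
/- Every finite word u over a finite alphabet contains exactly |u|+1 distinct privileged factors (counting the empty word). -/
open scoped ENNReal Classical

noncomputable section

namespace Arx1111

variable {A : Type*}

/-! ### Words and infinite words -/

/-- The left shift on right-infinite words. -/
def shift (ξ : ℕ → A) : ℕ → A := fun n => ξ (n + 1)

/-- The finite word `u` occurs in the infinite word `ξ` at position `k`. -/
def FactorAt (u : List A) (ξ : ℕ → A) (k : ℕ) : Prop :=
  u = (List.range u.length).map fun i => ξ (k + i)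

/-- `u` is a factor of the infinite word `ξ`. -/
def IsFactorOf (u : List A) (ξ : ℕ → A) : Prop := ∃ k, FactorAt u ξ k

/-- `u` is a prefix of the infinite word `ξ`. -/
def PrefixOfInf (u : List A) (ξ : ℕ → A) : Prop := FactorAt u ξ 0

/-- `u` is a proper prefix of `v`. -/
def PPrefix (u v : List A) : Prop := u <+: v ∧ u ≠ v

/-- The `n`-th power `u^n` of a finite word `u`. -/
def wordPow (u : List A) : ℕ → List A
  | 0 => []
  | n + 1 => u ++ wordPow u n

/-- The language of a set of infinite words: all finite factors of its elements. -/
def language (Ξ : Set (ℕ → A)) : Set (List A) := {u | ∃ ξ ∈ Ξ, IsFactorOf u ξ}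

/-! ### Subshifts -/

/-- `Ξ` is a (right-infinite) subshift: nonempty, closed, shift-invariant. -/
structure IsSubshift [TopologicalSpace A] (Ξ : Set (ℕ → A)) : Prop where
  nonempty : Ξ.Nonempty
  isClosed : IsClosed Ξ
  shift_mem : ∀ ξ ∈ Ξ, shift ξ ∈ Ξ

/-- Minimality: every orbit is dense in `Ξ`. -/
def IsMinimal [TopologicalSpace A] (Ξ : Set (ℕ → A)) : Prop :=
  ∀ ξ ∈ Ξ, Ξ ⊆ closure (Set.range fun n => shift^[n] ξ)

/-- Aperiodicity. -/
def Aperiodic (Ξ : Set (ℕ → A)) : Prop :=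
  ∀ ξ ∈ Ξ, ∀ n : ℕ, shift^[n] ξ = ξ → n = 0

/-! ### Occurrences, complete first returns, privileged words -/

variable [DecidableEq A]

/-- The number of occurrences of `u` as a factor of `w`. -/
def occCount (u w : List A) : ℕ :=
  ((List.range (w.length + 1)).filter fun k => (w.drop k).take u.length == u).length

/-- `u'` is a complete first return to `u`: if `u` is empty, `u'` is a single letter;
otherwise `u` is a prefix and a suffix of `u'` and occurs exactly twice in `u'`. -/
def IsCFR (u u' : List A) : Prop :=
  if u = [] then u'.length = 1
  else u <+: u' ∧ u <:+ u' ∧ occCount u u' = 2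

/-- Privileged words of order `n`. -/
inductive PrivOrder : ℕ → List A → Prop where
  | zero : PrivOrder 0 []
  | succ {n : ℕ} {u u' : List A} : PrivOrder n u → IsCFR u u' → PrivOrder (n + 1) u'

/-- A word is privileged if it is privileged of some order. -/
def IsPrivileged (u : List A) : Prop := ∃ n, PrivOrder n u

/-- `u'` is a complete first return to `u` inside the language `L`. -/
def CFRin (L : Set (List A)) (u u' : List A) : Prop := u' ∈ L ∧ IsCFR u u'

/-- `u` is right-special for the language `L`. -/
def RightSpecial (L : Set (List A)) (u : List A) : Prop :=
  u ∈ L ∧ ∃ a b : A, a ≠ b ∧ u ++ [a] ∈ L ∧ u ++ [b] ∈ L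

/-- `a(v)`: number of one-letter right extensions of `v` in `L`, minus one. -/
def aext (L : Set (List A)) (v : List A) : ℕ := Nat.card {a : A // v ++ [a] ∈ L} - 1

/-- `ã(v)`: number of complete first returns to `v` in `L`, minus one, if `v` is
privileged, and `0` otherwise. -/
def atil (L : Set (List A)) (v : List A) : ℕ :=
  if IsPrivileged v then Nat.card {u' : List A // CFRin L v u'} - 1 else 0

/-- `S(u)`: right-special words `r` with `u ⪯ r ≺ u'` for some complete first return `u'`. -/
def Sset (L : Set (List A)) (u : List A) : Set (List A) :=
  {r | RightSpecial L r ∧ ∃ u', CFRin L u u' ∧ u <+: r ∧ PPrefix r u'}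

/-- Right-special balanced: between a privileged word and any of its complete first
returns there is exactly one right-special word. -/
def RSBalanced (L : Set (List A)) : Prop :=
  ∀ u, IsPrivileged u → u ∈ L → ∀ u', CFRin L u u' →
    ∃! r, RightSpecial L r ∧ u <+: r ∧ PPrefix r u'

/-- `r'` is the shortest right-special word having `r` as a proper prefix. -/
def IsShortestRSExt (L : Set (List A)) (r r' : List A) : Prop :=
  RightSpecial L r' ∧ PPrefix r r' ∧
    ∀ r'', RightSpecial L r'' → PPrefix r r'' → r'.length ≤ r''.length

/-- `r = φ⁽⁰⁾(u)`: `r` is the shortest right-special word having `u` as a prefix. -/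
def IsPhi0 (L : Set (List A)) (u r : List A) : Prop :=
  RightSpecial L r ∧ u <+: r ∧ ∀ r', RightSpecial L r' → u <+: r' → r.length ≤ r'.length

/-- `H⁽¹⁾`: pairs of distinct one-letter right extensions of a common word. -/
def H1 (L : Set (List A)) (v₁ v₂ : List A) : Prop :=
  v₁ ∈ L ∧ v₂ ∈ L ∧ v₁ ≠ v₂ ∧ ∃ (w : List A) (a b : A), v₁ = w ++ [a] ∧ v₂ = w ++ [b]

/-- `H̃⁽¹⁾`: pairs of distinct complete first returns to a common privileged word. -/
def TildeH1 (L : Set (List A)) (u₁ u₂ : List A) : Prop :=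
  u₁ ≠ u₂ ∧ ∃ u, IsPrivileged u ∧ CFRin L u u₁ ∧ CFRin L u u₂

/-- Length of the longest common prefix of two finite words. -/
def lcpLenW (u v : List A) : ℕ := sSup {n | n ≤ u.length ∧ u.take n = v.take n}

/-- Length of the longest common privileged prefix of two finite words. -/
def weeLenW (u v : List A) : ℕ :=
  sSup {n | ∃ w : List A, IsPrivileged w ∧ w.length = n ∧ w <+: u ∧ w <+: v}

/-- `φ⁽¹⁾`: the pair of one-letter extensions of `u₁ ∧ u₂` which are prefixes of
`u₁` resp. `u₂`. -/
def phi1 (u₁ u₂ : List A) : List A × List A :=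
  (u₁.take (lcpLenW u₁ u₂ + 1), u₂.take (lcpLenW u₁ u₂ + 1))

/-! ### Bounded powers and repulsiveness -/

/-- Bounded powers: there is `p` such that no `(p+1)`-th power of a nonempty word
belongs to `L`. -/
def BoundedPowers (L : Set (List A)) : Prop :=
  ∃ p : ℕ, ∀ u ∈ L, u ≠ [] → wordPow u (p + 1) ∉ L

/-- The set of ratios `(|W|-|w|)/|w|` over words `w, W ∈ L` with `w` a nonempty proper
prefix and a suffix of `W`. -/
def repulsionSet (L : Set (List A)) : Set ℝ :=
  {x | ∃ w W : List A, w ∈ L ∧ W ∈ L ∧ w ≠ [] ∧ PPrefix w W ∧ w <:+ W ∧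
        x = ((W.length : ℝ) - (w.length : ℝ)) / (w.length : ℝ)}

/-- The index of repulsiveness `ℓ`. -/
def repulsionIndex (L : Set (List A)) : ℝ := sInf (repulsionSet L)

/-- Repulsive: `ℓ > 0`. -/
def Repulsive (L : Set (List A)) : Prop := 0 < repulsionIndex L

/-! ### Privileged prefixes of infinite words -/

/-- The `n`-th privileged prefix `ξ̃ₙ` of an infinite word `ξ`. -/
def privPrefix (ξ : ℕ → A) : ℕ → List A
  | 0 => []
  | n + 1 =>
    if h : ∃ u', IsCFR (privPrefix ξ n) u' ∧ PrefixOfInf u' ξ then h.choose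
    else privPrefix ξ n

/-- The order `ind(ξ ⩏ η)` of the longest common privileged prefix of two infinite
words; the word `ξ ⩏ η` itself is `privPrefix ξ (weeInd ξ η)`. -/
def weeInd (ξ η : ℕ → A) : ℕ := sSup {n | privPrefix ξ n = privPrefix η n}

/-- Length of the longest common prefix `ξ ∧ η` of two distinct infinite words. -/
def lcpLenInf (ξ η : ℕ → A) : ℕ := sInf {n | ξ n ≠ η n}

/-! ### Choice functions, weight functions and the metrics -/

/-- A choice function for `Ξ`. -/
def IsChoiceFun (Ξ : Set (ℕ → A)) (τ : List A → ℕ → A) : Prop :=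
  (∀ v ∈ language Ξ, τ v ∈ Ξ ∧ PrefixOfInf v (τ v)) ∧
  (∀ v ∈ language Ξ, ∀ w ∈ language Ξ, v.length < w.length →
    PrefixOfInf w (τ v) → τ w = τ v)

/-- A weight function. -/
structure IsWeight (δ : ℕ → ℝ) : Prop where
  pos : ∀ n, 0 < δ n
  strictAnti : StrictAnti δ
  tendsto_zero : Filter.Tendsto δ Filter.atTop (nhds 0)
  submul : ∃ c : ℝ, 0 < c ∧ ∀ a b : ℕ, δ (a * b) ≤ c * δ a * δ b
  doubling : ∃ c : ℝ, 0 < c ∧ ∀ a : ℕ, c * δ a ≤ δ (2 * a)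

variable [TopologicalSpace A]

/-- The metric `d_τ` associated to the right-special horizontal edges. -/
def dTau (Ξ : Set (ℕ → A)) (δ : ℕ → ℝ) (τ : List A → ℕ → A) (ξ η : ℕ → A) : ℝ≥0∞ :=
  ⨆ f : {f : (ℕ → A) → ℝ // ContinuousOn f Ξ ∧
      ∀ v₁ v₂, H1 (language Ξ) v₁ v₂ → |f (τ v₁) - f (τ v₂)| ≤ δ (lcpLenW v₁ v₂)},
    ENNReal.ofReal |f.1 ξ - f.1 η|

/-- The metric `d̃_τ` associated to the privileged horizontal edges. -/
def dTilTau (Ξ : Set (ℕ → A)) (δ : ℕ → ℝ) (τ : List A → ℕ → A) (ξ η : ℕ → A) : ℝ≥0∞ :=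
  ⨆ f : {f : (ℕ → A) → ℝ // ContinuousOn f Ξ ∧
      ∀ u₁ u₂, TildeH1 (language Ξ) u₁ u₂ → |f (τ u₁) - f (τ u₂)| ≤ δ (weeLenW u₁ u₂)},
    ENNReal.ofReal |f.1 ξ - f.1 η|

/-- `d_inf`. -/
def dInf (Ξ : Set (ℕ → A)) (δ : ℕ → ℝ) (ξ η : ℕ → A) : ℝ≥0∞ :=
  ⨅ τ : {τ // IsChoiceFun Ξ τ}, dTau Ξ δ τ.1 ξ η

/-- `d_sup`. -/
def dSup (Ξ : Set (ℕ → A)) (δ : ℕ → ℝ) (ξ η : ℕ → A) : ℝ≥0∞ :=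
  ⨆ τ : {τ // IsChoiceFun Ξ τ}, dTau Ξ δ τ.1 ξ η

/-- `d̃_inf`. -/
def dTilInf (Ξ : Set (ℕ → A)) (δ : ℕ → ℝ) (ξ η : ℕ → A) : ℝ≥0∞ :=
  ⨅ τ : {τ // IsChoiceFun Ξ τ}, dTilTau Ξ δ τ.1 ξ η

/-- `d̃_sup`. -/
def dTilSup (Ξ : Set (ℕ → A)) (δ : ℕ → ℝ) (ξ η : ℕ → A) : ℝ≥0∞ :=
  ⨆ τ : {τ // IsChoiceFun Ξ τ}, dTilTau Ξ δ τ.1 ξ η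

/-- `β̃_τ(ξ̃ₙ)`: equals `1` if the longest common privileged prefix of `τ(ξ̃ₙ)` and `ξ`
is `ξ̃ₙ`, and `0` otherwise. -/
def btil (τ : List A → ℕ → A) (ξ : ℕ → A) (n : ℕ) : ℝ≥0∞ :=
  if privPrefix (τ (privPrefix ξ n)) (weeInd (τ (privPrefix ξ n)) ξ) = privPrefix ξ n
  then 1 else 0

/-! ### Zeta functions -/

/-- `ζ_k(s)` (with the convention `0⁰ = 0`). -/
def zeta (L : Set (List A)) (δ : ℕ → ℝ) (k : ℕ) (s : ℝ) : ℝ≥0∞ :=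
  ∑' v : L, (if aext L (v : List A) = 0 then 0 else ((aext L (v : List A) : ℝ≥0∞)) ^ k) *
    ENNReal.ofReal (δ (v : List A).length ^ s)

/-- `ζ̃_k(s)` (with the convention `0⁰ = 0`). -/
def zetaTil (L : Set (List A)) (δ : ℕ → ℝ) (k : ℕ) (s : ℝ) : ℝ≥0∞ :=
  ∑' v : L, (if atil L (v : List A) = 0 then 0 else ((atil L (v : List A) : ℝ≥0∞)) ^ k) *
    ENNReal.ofReal (δ (v : List A).length ^ s)

/-- Almost finite privileged rank. -/
def AlmostFiniteRank (L : Set (List A)) : Prop :=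
  ∃ a b : ℝ, 0 < a ∧ 0 < b ∧ ∀ u, IsPrivileged u → u ∈ L → 2 ≤ u.length →
    (Nat.card {u' : List A // CFRin L u u'} : ℝ) ≤ a * (Real.log u.length) ^ b


/-! Each of the `|u| + 1` prefixes of `u` is sent to its longest privileged suffix. This is
injective because the longest privileged suffix of a word occurs in it only as a suffix. It is
onto the privileged factors because a privileged factor `v` is the longest privileged suffix of
the shortest prefix `p` of `u` ending with `v`: privileged suffixes of privileged words are also
prefixes, so a longer privileged suffix of `p` would begin with an earlier occurrence of `v`. -/

section Privileged

variable {A : Type*}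

lemma exists_min_length {P : List A → Prop} (h : ∃ w, P w) :
    ∃ w, P w ∧ ∀ w', P w' → w.length ≤ w'.length := by
  classical
  obtain ⟨w, hw⟩ := h
  have hn : ∃ n, ∃ w, P w ∧ w.length = n := ⟨w.length, w, hw, rfl⟩
  obtain ⟨w, hw, hlen⟩ := Nat.find_spec hn
  refine ⟨w, hw, fun w' hw' => ?_⟩
  rw [hlen]
  exact Nat.find_min' hn ⟨w', hw', rfl⟩

lemma prefix_dropLast_of_prefix_of_ne {v w : List A} (h : v <+: w) (hne : v ≠ w) :
    v <+: w.dropLast :=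
  List.prefix_of_prefix_length_le h (List.dropLast_prefix w) (by
    have := h.length_le
    have : v.length ≠ w.length := fun he => hne (h.eq_of_length he)
    simp only [List.length_dropLast]
    omega)

lemma suffix_dropLast_of_suffix {w p : List A} (h : w <:+ p) : w.dropLast <:+ p.dropLast := by
  obtain ⟨s, rfl⟩ := h
  rcases eq_or_ne w [] with rfl | hw
  · exact List.nil_suffix
  · rw [List.dropLast_append_of_ne_nil hw]
    exact List.suffix_append _ _

lemma add_length_le_of_prefix_drop {v w : List A} {k : ℕ} (hv : v ≠ []) (h : v <+: w.drop k) :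
    k + v.length ≤ w.length := by
  have := h.length_le
  have := List.length_pos_iff.mpr hv
  simp only [List.length_drop] at *
  omega

variable [DecidableEq A]

lemma occCount_eq_card (v w : List A) :
    occCount v w = ((Finset.range (w.length + 1)).filter fun k => v <+: w.drop k).card := by
  have h : ∀ k ∈ List.range (w.length + 1),
      ((w.drop k).take v.length == v) = decide (v <+: w.drop k) := by
    intro k _
    rw [Bool.eq_iff_iff, beq_iff_eq, decide_eq_true_eq, List.prefix_iff_eq_take, eq_comm]
  unfold occCount
  rw [List.filter_congr h]
  rfl

lemma isCFR_iff {v w : List A} (hv : v ≠ []) :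
    IsCFR v w ↔ v <+: w ∧ v <:+ w ∧ v.length < w.length ∧
      ∀ k, v <+: w.drop k → k = 0 ∨ k = w.length - v.length := by
  rw [IsCFR, if_neg hv, occCount_eq_card]
  set S := (Finset.range (w.length + 1)).filter fun k => v <+: w.drop k
  have hS : ∀ k, k ∈ S ↔ v <+: w.drop k := fun k => by
    simp only [S, Finset.mem_filter, Finset.mem_range, and_iff_right_iff_imp]
    intro h
    have := add_length_le_of_prefix_drop hv h
    omega
  have hend : ∀ k ∈ S, k ≤ w.length - v.length := fun k hk => by
    have := add_length_le_of_prefix_drop hv ((hS k).mp hk)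
    omega
  constructor
  · rintro ⟨hpre, hsuf, hcard⟩
    have h0 : 0 ∈ S := (hS 0).mpr (by simpa using hpre)
    have hd : w.length - v.length ∈ S := (hS _).mpr (by rw [← List.suffix_iff_eq_drop.mp hsuf])
    obtain ⟨x, y, hxy, hSxy⟩ := Finset.card_eq_two.mp hcard
    have hlt : v.length < w.length := by
      by_contra! hle
      have hx := hend x (by rw [hSxy]; simp)
      have hy := hend y (by rw [hSxy]; simp)
      omega
    refine ⟨hpre, hsuf, hlt, fun k hk => ?_⟩
    have hk := (hS k).mpr hk
    simp only [hSxy, Finset.mem_insert, Finset.mem_singleton] at h0 hd hk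
    omega
  · rintro ⟨hpre, hsuf, hlt, hocc⟩
    refine ⟨hpre, hsuf, ?_⟩
    have hSeq : S = {0, w.length - v.length} := by
      ext k
      rw [hS, Finset.mem_insert, Finset.mem_singleton]
      refine ⟨hocc k, ?_⟩
      rintro (rfl | rfl)
      · simpa using hpre
      · rw [← List.suffix_iff_eq_drop.mp hsuf]
    rw [hSeq, Finset.card_pair (by omega)]

lemma isPrivileged_nil : IsPrivileged ([] : List A) := ⟨0, .zero⟩

lemma isPrivileged_singleton (a : A) : IsPrivileged [a] :=
  ⟨1, .succ .zero (by simp [IsCFR])⟩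

lemma IsPrivileged.of_isCFR {v w : List A} (hv : IsPrivileged v) (h : IsCFR v w) :
    IsPrivileged w :=
  let ⟨n, hn⟩ := hv
  ⟨n + 1, .succ hn h⟩

lemma IsPrivileged.exists_isCFR {w : List A} (hw : IsPrivileged w) (hne : w ≠ []) :
    ∃ v, IsPrivileged v ∧ IsCFR v w := by
  obtain ⟨n, hn⟩ := hw
  cases hn with
  | zero => exact absurd rfl hne
  | succ hv hvw => exact ⟨_, ⟨_, hv⟩, hvw⟩

/-- Write `w` as a complete first return to `t`: a privileged suffix `v` shorter than `t` is a
prefix of `t` by induction, and one longer than `t` would begin with `t`, giving an occurrence of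
`t` strictly inside `w`. -/
theorem IsPrivileged.prefix_of_suffix {v w : List A} (hw : IsPrivileged w) (hv : IsPrivileged v)
    (h : v <:+ w) : v <+: w := by
  rcases eq_or_ne v w with rfl | hvw
  · exact List.prefix_rfl
  rcases eq_or_ne v [] with rfl | hv0
  · exact List.nil_prefix
  have hvw_len : v.length < w.length :=
    lt_of_le_of_ne h.length_le fun he => hvw (h.eq_of_length he)
  obtain ⟨t, ht, htw⟩ := hw.exists_isCFR (by rintro rfl; simp at hvw_len)
  rcases eq_or_ne t [] with rfl | ht0
  · have := List.length_pos_iff.mpr hv0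
    simp only [IsCFR, if_pos] at htw
    omega
  obtain ⟨htpre, htsuf, htlt, htocc⟩ := (isCFR_iff ht0).mp htw
  rcases le_or_gt v.length t.length with hle | hgt
  · have hvt : v <:+ t := List.suffix_of_suffix_length_le h htsuf hle
    exact (ht.prefix_of_suffix hv hvt).trans htpre
  · have htv : t <+: v :=
      hv.prefix_of_suffix ht (List.suffix_of_suffix_length_le htsuf h hgt.le)
    have := htocc (w.length - v.length) (by rwa [← List.suffix_iff_eq_drop.mp h])
    omega
termination_by w.length
decreasing_by all_goals omega

lemma exists_longest_privileged_suffix (p : List A) :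
    ∃ v, v <:+ p ∧ IsPrivileged v ∧ ∀ w, w <:+ p → IsPrivileged w → w.length ≤ v.length := by
  classical
  obtain ⟨v, hv, hmax⟩ := Finset.exists_max_image (p.tails.toFinset.filter IsPrivileged)
    List.length ⟨[], by simp [isPrivileged_nil]⟩
  simp only [Finset.mem_filter, List.mem_toFinset, List.mem_tails] at hv hmax
  exact ⟨v, hv.1, hv.2, fun w hw hwp => hmax w ⟨hw, hwp⟩⟩

def longestPrivSuffix (p : List A) : List A := (exists_longest_privileged_suffix p).choose

lemma longestPrivSuffix_suffix (p : List A) : longestPrivSuffix p <:+ p :=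
  (exists_longest_privileged_suffix p).choose_spec.1

lemma isPrivileged_longestPrivSuffix (p : List A) : IsPrivileged (longestPrivSuffix p) :=
  (exists_longest_privileged_suffix p).choose_spec.2.1

lemma length_le_longestPrivSuffix {v p : List A} (h : v <:+ p) (hv : IsPrivileged v) :
    v.length ≤ (longestPrivSuffix p).length :=
  (exists_longest_privileged_suffix p).choose_spec.2.2 v h hv

lemma suffix_longestPrivSuffix {v p : List A} (h : v <:+ p) (hv : IsPrivileged v) :
    v <:+ longestPrivSuffix p :=
  List.suffix_of_suffix_length_le h (longestPrivSuffix_suffix p)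
    (length_le_longestPrivSuffix h hv)

lemma longestPrivSuffix_ne_nil {p : List A} (hp : p ≠ []) : longestPrivSuffix p ≠ [] := by
  have hlast : [p.getLast hp] <:+ p := by
    conv_rhs => rw [← List.dropLast_append_getLast hp]
    exact List.suffix_append _ _
  have := length_le_longestPrivSuffix hlast (isPrivileged_singleton _)
  rintro h
  simp [h] at this

/-- Otherwise the shortest suffix of `p` starting with an earlier occurrence of it would be a
complete first return to it, hence a longer privileged suffix. -/
theorem longestPrivSuffix_not_infix_dropLast {p : List A} (hp : p ≠ []) :
    ¬ longestPrivSuffix p <:+: p.dropLast := by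
  set v := longestPrivSuffix p
  intro hinf
  have hv0 : v ≠ [] := longestPrivSuffix_ne_nil hp
  obtain ⟨w, ⟨hwp, hvw, hlt⟩, hmin⟩ :
      ∃ w, (w <:+ p ∧ v <+: w ∧ v.length < w.length) ∧
        ∀ w', w' <:+ p ∧ v <+: w' ∧ v.length < w'.length → w.length ≤ w'.length := by
    apply exists_min_length
    obtain ⟨t, hvt, htp⟩ := List.infix_iff_prefix_suffix.mp hinf
    refine ⟨t ++ [p.getLast hp], ?_, hvt.trans (List.prefix_append _ _), ?_⟩
    · obtain ⟨s, hs⟩ := htp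
      exact ⟨s, by rw [← List.append_assoc, hs, List.dropLast_append_getLast hp]⟩
    · simpa using Nat.lt_succ_of_le hvt.length_le
  have hcfr : IsCFR v w := by
    refine (isCFR_iff hv0).mpr ⟨hvw, ?_, hlt, fun k hk => ?_⟩
    · exact List.suffix_of_suffix_length_le (longestPrivSuffix_suffix p) hwp hlt.le
    · have hend := add_length_le_of_prefix_drop hv0 hk
      rcases hend.lt_or_eq with hlt' | heq
      · have := hmin (w.drop k)
          ⟨(List.drop_suffix k w).trans hwp, hk, by simp only [List.length_drop]; omega⟩
        simp only [List.length_drop] at this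
        omega
      · omega
  have : w.length ≤ v.length :=
    length_le_longestPrivSuffix hwp ((isPrivileged_longestPrivSuffix p).of_isCFR hcfr)
  omega

lemma longestPrivSuffix_take_ne {u : List A} {i j : ℕ} (hij : i < j) (hj : j ≤ u.length) :
    longestPrivSuffix (u.take i) ≠ longestPrivSuffix (u.take j) := by
  have hj0 : u.take j ≠ [] := by
    rw [← List.length_pos_iff, List.length_take]
    omega
  intro heq
  apply longestPrivSuffix_not_infix_dropLast hj0
  rw [← heq]
  refine (longestPrivSuffix_suffix _).isInfix.trans (List.IsPrefix.isInfix ?_)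
  refine List.prefix_of_prefix_length_le (List.take_prefix_take_left hij.le)
    (List.dropLast_prefix _) ?_
  simp only [List.length_dropLast, List.length_take]
  omega

theorem exists_prefix_longestPrivSuffix_eq {u v : List A} (hvu : v <:+: u)
    (hv : IsPrivileged v) : ∃ p, p <+: u ∧ longestPrivSuffix p = v := by
  obtain ⟨p, ⟨hvp, hpu⟩, hmin⟩ := exists_min_length (List.infix_iff_suffix_prefix.mp hvu)
  refine ⟨p, hpu, ?_⟩
  have hsuf := suffix_longestPrivSuffix hvp hv
  have hpre := (isPrivileged_longestPrivSuffix p).prefix_of_suffix hv hsuf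
  by_contra hne
  obtain ⟨q, hvq, hq⟩ := List.infix_iff_suffix_prefix.mp <|
    (prefix_dropLast_of_prefix_of_ne hpre (Ne.symm hne)).isInfix.trans
      (suffix_dropLast_of_suffix (longestPrivSuffix_suffix p)).isInfix
  have hp0 : p ≠ [] := by
    rintro rfl
    exact hne ((List.suffix_nil.mp (longestPrivSuffix_suffix [])).trans
      (List.suffix_nil.mp hvp).symm)
  have hpq := hmin q ⟨hvq, hq.trans ((List.dropLast_prefix p).trans hpu)⟩
  have hqp := hq.length_le
  have := List.length_pos_iff.mpr hp0
  rw [List.length_dropLast] at hqp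
  omega

end Privileged

theorem statement3_general {A : Type*} [DecidableEq A] (u : List A) :
    Nat.card {v : List A // v <:+: u ∧ IsPrivileged v} = u.length + 1 := by
  let f : Fin (u.length + 1) → List A := fun i => longestPrivSuffix (u.take i)
  have hf : Function.Injective f := fun i j hij => by
    rcases lt_trichotomy i j with h | h | h
    · exact absurd hij (longestPrivSuffix_take_ne h (by omega))
    · exact h
    · exact absurd hij.symm (longestPrivSuffix_take_ne h (by omega))
  have hrange : ∀ v, v <:+: u ∧ IsPrivileged v ↔ v ∈ Set.range f := fun v => by
    constructor
    · rintro ⟨hvu, hv⟩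
      obtain ⟨p, hpu, rfl⟩ := exists_prefix_longestPrivSuffix_eq hvu hv
      exact ⟨⟨p.length, Nat.lt_succ_of_le hpu.length_le⟩,
        by simp only [f, ← List.prefix_iff_eq_take.mp hpu]⟩
    · rintro ⟨i, rfl⟩
      exact ⟨(longestPrivSuffix_suffix _).isInfix.trans (List.take_prefix _ _).isInfix,
        isPrivileged_longestPrivSuffix _⟩
  rw [Nat.card_congr (Equiv.subtypeEquivRight hrange), Nat.card_range_of_injective hf,
    Nat.card_eq_fintype_card, Fintype.card_fin]

/-- Every finite word `u` over a finite alphabet contains exactly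
`|u| + 1` distinct privileged factors (counting the empty word). -/
theorem statement3 {A : Type*} [Fintype A] [DecidableEq A] (u : List A) :
    Nat.card {v : List A // v <:+: u ∧ IsPrivileged v} = u.length + 1 :=
  statement3_general u

end Arx1111
end
end

section
/- Let Ξ be a minimal and aperiodic right-infinite subshift over a finite alphabet with language ℒ. The cylinder sets [v] = { ξ ∈ Ξ : v is a prefix of ξ }, for v ∈ ℒ privileged, form a basis of clopen sets for the topology of Ξ. -/
open scoped ENNReal Classical

/-!
By minimality every prefix `v` of a point `ξ ∈ Ξ` occurs again in `ξ`; cutting `ξ` just after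
the first such return gives a complete first return to `v` that is again a prefix of `ξ`.
Starting from the empty word, every point therefore has arbitrarily long privileged prefixes,
and the cylinders of long prefixes of `ξ` shrink to `ξ` in the product topology.
-/

namespace Arx1111

open PiNat TopologicalSpace

variable {A : Type*}

lemma factorAt_iff {u : List A} {ξ : ℕ → A} {k : ℕ} :
    FactorAt u ξ k ↔ ∀ i (h : i < u.length), u[i] = ξ (k + i) := by
  refine ⟨fun h i hi => ?_, fun h => List.ext_getElem (by simp) fun i hi _ => by simp [h i hi]⟩
  rw [List.getElem_of_eq h hi]
  simp

lemma shift_iterate_apply (ξ : ℕ → A) (n i : ℕ) : shift^[n] ξ i = ξ (n + i) := by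
  induction n generalizing ξ with
  | zero => simp
  | succ n ih =>
    rw [Function.iterate_succ_apply, ih, shift]
    ring_nf

lemma factorAt_iff_prefixOfInf_shift_iterate {u : List A} {ξ : ℕ → A} {k : ℕ} :
    FactorAt u ξ k ↔ PrefixOfInf u (shift^[k] ξ) := by
  simp only [PrefixOfInf, factorAt_iff, shift_iterate_apply, zero_add]

lemma setOf_prefixOfInf_eq_cylinder {v : List A} {ξ : ℕ → A} (h : PrefixOfInf v ξ) :
    {η | PrefixOfInf v η} = cylinder ξ v.length := by
  ext η
  simp only [PrefixOfInf, Set.mem_ofPred_eq, factorAt_iff, zero_add, mem_cylinder_iff] at h ⊢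
  exact ⟨fun hη i hi => (hη i hi).symm.trans (h i hi), fun hη i hi => (h i hi).trans (hη i hi).symm⟩

lemma length_filter_range_eq_two {n a b : ℕ} (hab : a ≠ b) (ha : a < n) (hb : b < n)
    {p : ℕ → Bool} (hp : ∀ j < n, p j ↔ j = a ∨ j = b) :
    ((List.range n).filter p).length = 2 := by
  have hfilter : (Finset.range n).filter (fun j => p j) = {a, b} := by
    ext j
    simp only [Finset.mem_filter, Finset.mem_range, Finset.mem_insert, Finset.mem_singleton]
    refine ⟨fun ⟨hj, hpj⟩ => (hp j hj).mp hpj, fun hj => ?_⟩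
    have hjn : j < n := by rcases hj with rfl | rfl <;> assumption
    exact ⟨hjn, (hp j hjn).mpr hj⟩
  rw [← Finset.card_pair hab, ← hfilter]
  simp [Finset.filter, Finset.range, Multiset.range]

def prefixWord (ξ : ℕ → A) (m : ℕ) : List A := (List.range m).map ξ

@[simp] lemma length_prefixWord (ξ : ℕ → A) (m : ℕ) : (prefixWord ξ m).length = m := by
  simp [prefixWord]

lemma prefixOfInf_prefixWord (ξ : ℕ → A) (m : ℕ) : PrefixOfInf (prefixWord ξ m) ξ :=
  factorAt_iff.mpr fun i _ => by simp [prefixWord]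

lemma factorAt_iff_take_drop_prefixWord {u : List A} {ξ : ℕ → A} {j m : ℕ}
    (h : j + u.length ≤ m) :
    FactorAt u ξ j ↔ ((prefixWord ξ m).drop j).take u.length = u := by
  have : ((prefixWord ξ m).drop j).take u.length = (List.range u.length).map (ξ <| j + ·) :=
    List.ext_getElem (by simp; omega) fun i _ _ => by simp [prefixWord]
  rw [this, FactorAt, eq_comm]

section

variable [DecidableEq A]

lemma isCFR_prefixWord_of_firstReturn {v : List A} (hv : v ≠ []) {ξ : ℕ → A} {k : ℕ}
    (hk : 0 < k) (h₀ : FactorAt v ξ 0) (hₖ : FactorAt v ξ k)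
    (hfirst : ∀ j, 0 < j → j < k → ¬FactorAt v ξ j) :
    IsCFR v (prefixWord ξ (k + v.length)) := by
  have hlen : 0 < v.length := List.length_pos_iff.mpr hv
  have hocc : ∀ j ≤ k,
      FactorAt v ξ j ↔ ((prefixWord ξ (k + v.length)).drop j).take v.length = v :=
    fun j hj => factorAt_iff_take_drop_prefixWord (by omega)
  rw [IsCFR, if_neg hv]
  refine ⟨?_, ?_, ?_⟩
  · have hpre := (hocc 0 k.zero_le).mp h₀
    rw [List.drop_zero] at hpre
    exact List.prefix_iff_eq_take.mpr hpre.symm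
  · have hsuf := (hocc k le_rfl).mp hₖ
    rw [List.take_of_length_le (by simp)] at hsuf
    rw [List.suffix_iff_eq_drop, length_prefixWord, Nat.add_sub_cancel]
    exact hsuf.symm
  · refine length_filter_range_eq_two hk.ne (by simp) (by simp) fun j hj => ?_
    rw [beq_iff_eq]
    rcases Nat.lt_trichotomy j k with hjk | rfl | hkj
    · rw [← hocc j hjk.le]
      rcases j.eq_zero_or_pos with rfl | hj₀
      · simpa using h₀
      · simpa [hj₀.ne', hjk.ne] using hfirst j hj₀ hjk
    · rw [← hocc j le_rfl]
      simpa using hₖ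
    · have : (((prefixWord ξ (k + v.length)).drop j).take v.length).length < v.length := by
        simp; omega
      simp only [hkj.ne', (hk.trans hkj).ne', or_self, iff_false]
      exact fun h => this.ne (congrArg List.length h)

end

section Topology

variable [TopologicalSpace A] [DiscreteTopology A]

lemma isClopen_setOf_prefixOfInf (v : List A) : IsClopen {η : ℕ → A | PrefixOfInf v η} := by
  have : {η : ℕ → A | PrefixOfInf v η} = ⋂ i : Fin v.length, (fun η => η i) ⁻¹' {v[i]} := by
    ext η
    simp [PrefixOfInf, factorAt_iff, Fin.forall_iff, eq_comm]
  rw [this]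
  exact isClopen_iInter_of_finite fun i => (isClopen_discrete _).preimage (continuous_apply _)

lemma exists_cylinder_subset {U : Set (ℕ → A)} (hU : IsOpen U) {ξ : ℕ → A} (hξ : ξ ∈ U) :
    ∃ n, cylinder ξ n ⊆ U := by
  obtain ⟨_, ⟨ζ, n, rfl⟩, hξζ, hζU⟩ :=
    (isTopologicalBasis_cylinders (E := fun _ => A)).exists_subset_of_mem_open hξ hU
  exact ⟨n, mem_cylinder_iff_eq.mp hξζ ▸ hζU⟩

lemma exists_pos_factorAt_of_prefixOfInf {Ξ : Set (ℕ → A)}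
    (hshift : ∀ ξ ∈ Ξ, shift ξ ∈ Ξ) (hmin : IsMinimal Ξ) {ξ : ℕ → A} (hξ : ξ ∈ Ξ)
    {v : List A} (hv : PrefixOfInf v ξ) : ∃ k, 0 < k ∧ FactorAt v ξ k := by
  obtain ⟨_, hv', n, rfl⟩ := mem_closure_iff.mp (hmin _ (hshift ξ hξ) hξ) _
    (isClopen_setOf_prefixOfInf v).isOpen hv
  refine ⟨n + 1, n.succ_pos, factorAt_iff_prefixOfInf_shift_iterate.mpr ?_⟩
  rwa [Function.iterate_succ_apply]

variable [DecidableEq A]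

lemma exists_isCFR_prefixOfInf {Ξ : Set (ℕ → A)} (hshift : ∀ ξ ∈ Ξ, shift ξ ∈ Ξ)
    (hmin : IsMinimal Ξ) {ξ : ℕ → A} (hξ : ξ ∈ Ξ) {v : List A} (hv : PrefixOfInf v ξ) :
    ∃ v', IsCFR v v' ∧ PrefixOfInf v' ξ ∧ v.length < v'.length := by
  rcases eq_or_ne v [] with rfl | hv₀
  · exact ⟨prefixWord ξ 1, by simp [IsCFR], prefixOfInf_prefixWord ξ 1, by simp⟩
  have hreturn := exists_pos_factorAt_of_prefixOfInf hshift hmin hξ hv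
  obtain ⟨hk, hₖ⟩ := Nat.find_spec hreturn
  refine ⟨prefixWord ξ (Nat.find hreturn + v.length), ?_, prefixOfInf_prefixWord _ _,
    by simp [hk]⟩
  exact isCFR_prefixWord_of_firstReturn hv₀ hk hv hₖ fun j hj hjk hj' =>
    Nat.find_min hreturn hjk ⟨hj, hj'⟩

lemma exists_privileged_prefixOfInf_length_ge {Ξ : Set (ℕ → A)}
    (hshift : ∀ ξ ∈ Ξ, shift ξ ∈ Ξ) (hmin : IsMinimal Ξ) {ξ : ℕ → A} (hξ : ξ ∈ Ξ) (N : ℕ) :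
    ∃ v, IsPrivileged v ∧ PrefixOfInf v ξ ∧ N ≤ v.length := by
  induction N with
  | zero => exact ⟨[], ⟨0, .zero⟩, factorAt_iff.mpr nofun, le_rfl⟩
  | succ N ih =>
    obtain ⟨v, ⟨n, hn⟩, hv, hN⟩ := ih
    obtain ⟨v', hcfr, hv', hlt⟩ := exists_isCFR_prefixOfInf hshift hmin hξ hv
    exact ⟨v', ⟨n + 1, hn.succ hcfr⟩, hv', by omega⟩

end Topology

theorem statement6_general {A : Type*} [DecidableEq A] [TopologicalSpace A]
    [DiscreteTopology A] (Ξ : Set (ℕ → A)) (hΞ : IsSubshift Ξ) (hmin : IsMinimal Ξ) :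
    TopologicalSpace.IsTopologicalBasis
        {S : Set Ξ | ∃ v ∈ language Ξ, IsPrivileged v ∧ S = {x : Ξ | PrefixOfInf v x.1}} ∧
      ∀ v ∈ language Ξ, IsPrivileged v → IsClopen {x : Ξ | PrefixOfInf v x.1} := by
  have hclopen (v : List A) : IsClopen {x : Ξ | PrefixOfInf v x.1} :=
    (isClopen_setOf_prefixOfInf v).preimage continuous_subtype_val
  refine ⟨isTopologicalBasis_of_isOpen_of_nhds ?_ ?_, fun v _ _ => hclopen v⟩
  · rintro _ ⟨v, -, -, rfl⟩
    exact (hclopen v).isOpen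
  · rintro ⟨ξ, hξ⟩ _ hξU ⟨V, hV, rfl⟩
    obtain ⟨n, hn⟩ := exists_cylinder_subset hV hξU
    obtain ⟨v, hvP, hvξ, hnv⟩ :=
      exists_privileged_prefixOfInf_length_ge hΞ.shift_mem hmin hξ n
    refine ⟨_, ⟨v, ⟨ξ, hξ, 0, hvξ⟩, hvP, rfl⟩, hvξ, fun η hη => hn ?_⟩
    have hη' : η.1 ∈ cylinder ξ v.length := setOf_prefixOfInf_eq_cylinder hvξ ▸ hη
    exact cylinder_anti ξ hnv hη'

/-- For a minimal and aperiodic right-infinite subshift over a finite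
alphabet, the cylinder sets of privileged words of the language form a basis of clopen
sets for the topology of `Ξ`. -/
theorem statement6 {A : Type*} [Fintype A] [DecidableEq A] [TopologicalSpace A]
    [DiscreteTopology A] (Ξ : Set (ℕ → A)) (hΞ : IsSubshift Ξ) (hmin : IsMinimal Ξ)
    (hap : Aperiodic Ξ) :
    TopologicalSpace.IsTopologicalBasis
        {S : Set Ξ | ∃ v ∈ language Ξ, IsPrivileged v ∧ S = {x : Ξ | PrefixOfInf v x.1}} ∧
      ∀ v ∈ language Ξ, IsPrivileged v → IsClopen {x : Ξ | PrefixOfInf v x.1} :=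
  statement6_general Ξ hΞ hmin

end Arx1111
end

section
/- Let Ξ be a minimal and aperiodic right-infinite subshift over a finite alphabet with language ℒ. For every privileged word u ∈ ℒ one has ã(u) = Σ_{r ∈ S(u)} a(r). In particular the cardinality of S(u) is at most ã(u). -/
open scoped ENNReal Classical

noncomputable section

/-!
Fix `u ∈ ℒ` and consider the words `w ∈ ℒ` that begin with `u` and contain exactly one
occurrence of `u`. Appending a letter to such a `w` gives either another such word or a complete
first return to `u`; conversely, deleting the last letter of such a word other than `u`, or of a
complete first return, gives such a word. So these words are the inner nodes of a rooted tree
whose leaves are the complete first returns to `u`. The tree is finite because, by minimality and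
compactness, `u` occurs in every window of some fixed length. Counting children gives
`#returns - 1 = Σ_w a(w)`, and only the right-special nodes contribute, each at least `1`; these
are exactly the elements of `S(u)`.
-/

namespace Arx1111

variable {A : Type*}

lemma PPrefix.length_lt {w v : List A} (h : PPrefix w v) : w.length < v.length :=
  lt_of_le_of_ne h.1.length_le fun hlen => h.2 (h.1.eq_of_length hlen)

lemma PPrefix.trans {u v w : List A} (h₁ : PPrefix u v) (h₂ : PPrefix v w) : PPrefix u w :=
  ⟨h₁.1.trans h₂.1, fun h => (h₁.length_lt.trans h₂.length_lt).ne (congrArg List.length h)⟩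

lemma PPrefix.ne_nil {w v : List A} (h : PPrefix w v) : v ≠ [] := by
  rintro rfl
  exact h.2 (List.prefix_nil.1 h.1)

lemma PPrefix.prefix_dropLast {w v : List A} (h : PPrefix w v) : w <+: v.dropLast := by
  rw [List.dropLast_eq_take, List.prefix_take_iff]
  exact ⟨h.1, by have := h.length_lt; omega⟩

section Extensions

variable {L : Set (List A)}

lemma rightSpecial_iff_one_le_aext [Finite A] {w : List A} (hw : w ∈ L) :
    RightSpecial L w ↔ 1 ≤ aext L w := by
  have h1 : 1 ≤ Nat.card {a : A // w ++ [a] ∈ L} - 1 ↔ 1 < Nat.card {a : A // w ++ [a] ∈ L} := by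
    omega
  rw [RightSpecial, aext, and_iff_right hw, h1, Finite.one_lt_card_iff_nontrivial, nontrivial_iff]
  constructor
  · rintro ⟨a, b, hab, ha, hb⟩
    exact ⟨⟨a, ha⟩, ⟨b, hb⟩, fun h => hab (congrArg Subtype.val h)⟩
  · rintro ⟨⟨a, ha⟩, ⟨b, hb⟩, hab⟩
    exact ⟨a, b, fun h => hab (Subtype.ext h), ha, hb⟩

lemma aext_add_one [Finite A] {w : List A} (h : ∃ a, w ++ [a] ∈ L) :
    aext L w + 1 = Nat.card {a : A // w ++ [a] ∈ L} := by
  obtain ⟨a, ha⟩ := h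
  have : 0 < Nat.card {a : A // w ++ [a] ∈ L} := Nat.card_pos_iff.2 ⟨⟨⟨a, ha⟩⟩, inferInstance⟩
  rw [aext]
  omega

def rightExtensions [Fintype A] (L : Set (List A)) (w : List A) : Finset (List A) :=
  (Finset.univ.filter fun a => w ++ [a] ∈ L).image (w ++ [·])

lemma mem_rightExtensions [Fintype A] {w v : List A} :
    v ∈ rightExtensions L w ↔ v ∈ L ∧ ∃ a, v = w ++ [a] := by
  simp only [rightExtensions, Finset.mem_image, Finset.mem_filter, Finset.mem_univ, true_and]
  constructor
  · rintro ⟨a, ha, rfl⟩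
    exact ⟨ha, a, rfl⟩
  · rintro ⟨hv, a, rfl⟩
    exact ⟨a, hv, rfl⟩

lemma card_rightExtensions [Fintype A] {w : List A} (h : ∃ a, w ++ [a] ∈ L) :
    (rightExtensions L w).card = aext L w + 1 := by
  have hinj : Function.Injective fun a : A => w ++ [a] := fun a b h => by simpa using h
  rw [rightExtensions, Finset.card_image_of_injective _ hinj, aext_add_one h,
    Nat.card_eq_fintype_card, Fintype.card_subtype]

lemma card_biUnion_rightExtensions [Fintype A] [DecidableEq A] (hext : ∀ w ∈ L, ∃ a, w ++ [a] ∈ L)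
    {P : Finset (List A)} (hP : ∀ w ∈ P, w ∈ L) :
    (P.biUnion (rightExtensions L)).card = ∑ w ∈ P, (aext L w + 1) := by
  rw [Finset.card_biUnion]
  · exact Finset.sum_congr rfl fun w hw => card_rightExtensions (hext w (hP w hw))
  · intro w₁ _ w₂ _ hne
    refine Finset.disjoint_left.2 fun v h₁ h₂ => hne ?_
    obtain ⟨-, a, rfl⟩ := mem_rightExtensions.1 h₁
    obtain ⟨-, b, hb⟩ := mem_rightExtensions.1 h₂
    exact List.append_inj_left' hb rfl

end Extensions

section Subshift

variable {Ξ : Set (ℕ → A)} {ξ : ℕ → A}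

lemma factorAt_iff_getElem {u : List A} {k : ℕ} :
    FactorAt u ξ k ↔ ∀ i (hi : i < u.length), u[i] = ξ (k + i) := by
  rw [FactorAt, List.ext_getElem_iff]
  simp

lemma FactorAt.of_prefix {u w : List A} {k : ℕ} (h : FactorAt w ξ k) (hu : u <+: w) :
    FactorAt u ξ k :=
  factorAt_iff_getElem.2 fun i hi => by
    rw [hu.getElem, factorAt_iff_getElem.1 h]

lemma mem_language_of_prefix {u w : List A} (hu : u <+: w) (hw : w ∈ language Ξ) :
    u ∈ language Ξ :=
  let ⟨ξ, hξ, k, h⟩ := hw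
  ⟨ξ, hξ, k, h.of_prefix hu⟩

lemma exists_append_singleton_mem_language {w : List A} (hw : w ∈ language Ξ) :
    ∃ a, w ++ [a] ∈ language Ξ := by
  obtain ⟨ξ, hξ, k, h⟩ := hw
  refine ⟨ξ (k + w.length), ξ, hξ, k, factorAt_iff_getElem.2 fun i hi => ?_⟩
  rw [List.getElem_append]
  split_ifs with hiw
  · exact factorAt_iff_getElem.1 h i hiw
  · obtain rfl : i = w.length := by
      simp only [List.length_append, List.length_singleton] at hi
      omega
    simp

lemma prefix_drop_of_factorAt {u w : List A} {k m : ℕ} (hw : FactorAt w ξ k)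
    (hu : FactorAt u ξ (k + m)) (hm : m + u.length ≤ w.length) : u <+: w.drop m := by
  rw [List.prefix_iff_getElem]
  refine ⟨by rw [List.length_drop]; omega, fun i hi => ?_⟩
  rw [factorAt_iff_getElem.1 hu, List.getElem_drop, factorAt_iff_getElem.1 hw, add_assoc]

lemma shift_iterate (n : ℕ) (ξ : ℕ → A) : shift^[n] ξ = fun i => ξ (n + i) := by
  induction n generalizing ξ with
  | zero => simp
  | succ n ih =>
    rw [Function.iterate_succ_apply, ih]
    funext i
    simp only [shift]
    congr 1
    omega

variable [TopologicalSpace A] [DiscreteTopology A]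

lemma isOpen_setOf_factorAt (u : List A) (k : ℕ) : IsOpen {ξ : ℕ → A | FactorAt u ξ k} := by
  have : {ξ : ℕ → A | FactorAt u ξ k} = ⋂ i : Fin u.length, (· (k + i)) ⁻¹' {u[i]} := by
    ext ξ
    simp [factorAt_iff_getElem, Fin.forall_iff, eq_comm]
  rw [this]
  exact isOpen_iInter_of_finite fun i => (isOpen_discrete _).preimage (continuous_apply _)

lemma IsMinimal.exists_factorAt (hmin : IsMinimal Ξ) {u : List A} (hu : u ∈ language Ξ)
    (hξ : ξ ∈ Ξ) : ∃ n, FactorAt u ξ n := by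
  obtain ⟨η, hη, k, hk⟩ := hu
  obtain ⟨-, hU, n, rfl⟩ :=
    mem_closure_iff.1 (hmin ξ hξ hη) _ (isOpen_setOf_factorAt u k) hk
  refine ⟨n + k, factorAt_iff_getElem.2 fun i hi => ?_⟩
  rw [factorAt_iff_getElem.1 hU, shift_iterate, add_assoc]

lemma IsMinimal.exists_bound_factorAt [Finite A] (hΞ : IsSubshift Ξ) (hmin : IsMinimal Ξ)
    {u : List A} (hu : u ∈ language Ξ) : ∃ N, ∀ ξ ∈ Ξ, ∀ k, ∃ j < N, FactorAt u ξ (k + j) := by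
  obtain ⟨t, ht⟩ := hΞ.isClosed.isCompact.elim_finite_subcover _
    (isOpen_setOf_factorAt u) fun ξ hξ => Set.mem_iUnion.2 (hmin.exists_factorAt hu hξ)
  refine ⟨t.sup id + 1, fun ξ hξ k => ?_⟩
  obtain ⟨j, hj, hjk⟩ := Set.mem_iUnion₂.1 (ht ((Set.MapsTo.iterate hΞ.shift_mem k) hξ))
  refine ⟨j, Nat.lt_succ_of_le (Finset.le_sup (f := id) hj), factorAt_iff_getElem.2 fun i hi => ?_⟩
  rw [factorAt_iff_getElem.1 hjk, shift_iterate, add_assoc]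

end Subshift

variable [DecidableEq A]

def occFinset (u w : List A) : Finset ℕ :=
  (Finset.range (w.length + 1)).filter fun k => (w.drop k).take u.length = u

lemma mem_occFinset {u w : List A} {k : ℕ} :
    k ∈ occFinset u w ↔ k + u.length ≤ w.length ∧ u <+: w.drop k := by
  rw [occFinset, Finset.mem_filter, Finset.mem_range, List.prefix_iff_eq_take, eq_comm]
  refine ⟨fun ⟨hk, h⟩ => ⟨?_, h⟩, fun ⟨hk, h⟩ => ⟨by omega, h⟩⟩
  have := congrArg List.length h
  simp only [List.length_take, List.length_drop] at this
  omega

lemma mem_occFinset_append_singleton {u w : List A} {a : A} {k : ℕ} :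
    k ∈ occFinset u (w ++ [a]) ↔
      k ∈ occFinset u w ∨ (u <:+ w ++ [a] ∧ k + u.length = w.length + 1) := by
  simp only [mem_occFinset, List.length_append, List.length_singleton]
  rcases lt_trichotomy (k + u.length) (w.length + 1) with hlt | heq | hgt
  · have hne : u ≠ w.drop k ++ [a] := fun h => by
      have := congrArg List.length h
      simp only [List.length_append, List.length_drop, List.length_singleton] at this
      omega
    rw [List.drop_append_of_le_length (by omega), List.prefix_concat_iff]
    simp only [hne, false_or, hlt.ne, and_false, or_false, Nat.le_of_lt_succ hlt,
      hlt.le, true_and]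
  · have hk : (w ++ [a]).length - u.length = k := by
      rw [List.length_append, List.length_singleton]
      omega
    rw [List.suffix_iff_eq_drop, hk, List.prefix_iff_eq_take,
      List.take_of_length_le (by rw [List.length_drop, List.length_append]; simp; omega)]
    simp [heq]
  · simp [hgt.not_ge, hgt.ne', (Nat.lt_of_succ_lt hgt).not_ge]

lemma occCount_eq_card_occFinset (u w : List A) : occCount u w = (occFinset u w).card := by
  simp only [occCount, occFinset, Finset.card_def, Finset.filter_val, Finset.range_val,
    Multiset.range, Multiset.filter_coe, Multiset.coe_card, beq_eq_decide]

lemma occCount_append_singleton (u w : List A) (a : A) :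
    occCount u (w ++ [a]) = occCount u w + if u <:+ w ++ [a] then 1 else 0 := by
  simp only [occCount_eq_card_occFinset]
  split_ifs with hs
  · have hlen := hs.length_le
    simp only [List.length_append, List.length_singleton] at hlen
    have hnew : w.length + 1 - u.length ∉ occFinset u w := fun h => by
      have := (mem_occFinset.1 h).1
      omega
    rw [← Finset.card_insert_of_notMem hnew]
    congr 1
    ext k
    rw [mem_occFinset_append_singleton, Finset.mem_insert]
    constructor
    · rintro (h | ⟨-, h⟩)
      · exact Or.inr h
      · exact Or.inl (by omega)
    · rintro (h | h)
      · exact Or.inr ⟨hs, by omega⟩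
      · exact Or.inl h
  · rw [add_zero]
    congr 1
    ext k
    simp [mem_occFinset_append_singleton, hs]

lemma zero_mem_occFinset {u w : List A} (h : u <+: w) : 0 ∈ occFinset u w :=
  mem_occFinset.2 ⟨by simpa using h.length_le, h⟩

lemma occCount_pos {u w : List A} (h : u <+: w) : 0 < occCount u w := by
  rw [occCount_eq_card_occFinset]
  exact Finset.card_pos.2 ⟨0, zero_mem_occFinset h⟩

lemma occCount_mono {u w' w : List A} (h : w' <+: w) : occCount u w' ≤ occCount u w := by
  simp only [occCount_eq_card_occFinset]
  refine Finset.card_le_card fun k hk => ?_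
  rw [mem_occFinset] at hk ⊢
  exact ⟨hk.1.trans h.length_le, hk.2.trans (h.drop k)⟩

lemma occCount_self (u : List A) : occCount u u = 1 := by
  rw [occCount_eq_card_occFinset, Finset.card_eq_one]
  refine ⟨0, Finset.eq_singleton_iff_unique_mem.2 ⟨zero_mem_occFinset (List.prefix_refl u), ?_⟩⟩
  intro k hk
  have := (mem_occFinset.1 hk).1
  omega

lemma occCount_nil_left (w : List A) : occCount [] w = w.length + 1 := by
  simp [occCount_eq_card_occFinset, occFinset]

lemma isCFR_iff_s7 {u v : List A} : IsCFR u v ↔ u <+: v ∧ u <:+ v ∧ occCount u v = 2 := by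
  by_cases hu : u = []
  · simp [IsCFR, hu, occCount_nil_left]
  · rw [IsCFR, if_neg hu]

lemma IsCFR.pprefix {u v : List A} (h : IsCFR u v) : PPrefix u v := by
  obtain ⟨hp, -, h2⟩ := isCFR_iff_s7.1 h
  refine ⟨hp, fun huv => ?_⟩
  rw [← huv, occCount_self] at h2
  omega

lemma occCount_eq_one_iff_append_singleton {u w : List A} (hu : u <+: w) (a : A) :
    occCount u w = 1 ↔ occCount u (w ++ [a]) = 1 ∨ IsCFR u (w ++ [a]) := by
  have hua : u <+: w ++ [a] := hu.trans (List.prefix_append w [a])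
  have hpos := occCount_pos hu
  rw [isCFR_iff_s7, occCount_append_singleton]
  split_ifs with hs <;> simp [hua, hs]
  omega

lemma occCount_eq_one_of_isCFR {u w v : List A} (hv : IsCFR u v) (hu : u <+: w)
    (hw : PPrefix w v) : occCount u w = 1 := by
  have hv0 := hw.ne_nil
  have hwv := hw.prefix_dropLast
  have hlast := (occCount_eq_one_iff_append_singleton (hu.trans hwv) (v.getLast hv0)).2
    (Or.inr (by rwa [List.dropLast_append_getLast hv0]))
  have := occCount_mono (u := u) hwv
  have := occCount_pos hu
  omega

/-- The words `w ∈ L` with `u ⪯ w ≺ u'` for some complete first return `u'` to `u`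
(see `sset_eq_sep_returnPrefixes`). -/
def returnPrefixes (L : Set (List A)) (u : List A) : Set (List A) :=
  {w | w ∈ L ∧ u <+: w ∧ occCount u w = 1}

section Language

variable {L : Set (List A)} {u : List A}

lemma append_singleton_mem_returnPrefixes_iff (hpre : ∀ w a, w ++ [a] ∈ L → w ∈ L)
    {w : List A} {a : A} (hu : u <+: w) (hwa : w ++ [a] ∈ L) :
    w ∈ returnPrefixes L u ↔ w ++ [a] ∈ returnPrefixes L u ∨ CFRin L u (w ++ [a]) := by
  simp only [returnPrefixes, CFRin, Set.mem_ofPred_eq, hpre w a hwa, hu, hwa,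
    hu.trans (List.prefix_append w [a]), true_and, occCount_eq_one_iff_append_singleton hu a]

lemma not_cfrIn_of_mem_returnPrefixes {w : List A} (hw : w ∈ returnPrefixes L u) :
    ¬ CFRin L u w := fun h => by
  have := (isCFR_iff_s7.1 h.2).2.2
  have := hw.2.2
  omega

lemma pprefix_of_mem_returnPrefixes_or_cfrIn {v : List A}
    (hv : v ∈ returnPrefixes L u ∨ CFRin L u v) (hvu : v ≠ u) : PPrefix u v :=
  hv.elim (fun h => ⟨h.2.1, hvu.symm⟩) (·.2.pprefix)

lemma dropLast_mem_returnPrefixes (hpre : ∀ w a, w ++ [a] ∈ L → w ∈ L) {v : List A}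
    (hv : v ∈ returnPrefixes L u ∨ CFRin L u v) (hvu : v ≠ u) :
    v.dropLast ∈ returnPrefixes L u := by
  have huv := pprefix_of_mem_returnPrefixes_or_cfrIn hv hvu
  have hv0 := huv.ne_nil
  have hu := huv.prefix_dropLast
  have hvL : v.dropLast ++ [v.getLast hv0] ∈ L := by
    rw [List.dropLast_append_getLast hv0]
    exact hv.elim (·.1) (·.1)
  rwa [append_singleton_mem_returnPrefixes_iff hpre hu hvL, List.dropLast_append_getLast hv0]

lemma mem_biUnion_rightExtensions_iff [Fintype A] (hpre : ∀ w a, w ++ [a] ∈ L → w ∈ L)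
    (hfin : (returnPrefixes L u).Finite) {v : List A} :
    v ∈ hfin.toFinset.biUnion (rightExtensions L) ↔
      v ≠ u ∧ (v ∈ returnPrefixes L u ∨ CFRin L u v) := by
  simp only [Finset.mem_biUnion, Set.Finite.mem_toFinset, mem_rightExtensions]
  constructor
  · rintro ⟨w, hw, hvL, a, rfl⟩
    refine ⟨fun h => ?_, (append_singleton_mem_returnPrefixes_iff hpre hw.2.1 hvL).1 hw⟩
    have := hw.2.1.length_le
    rw [← h, List.length_append, List.length_singleton] at this
    omega
  · rintro ⟨hvu, hv⟩
    have hv0 := (pprefix_of_mem_returnPrefixes_or_cfrIn hv hvu).ne_nil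
    exact ⟨v.dropLast, dropLast_mem_returnPrefixes hpre hv hvu, hv.elim (·.1) (·.1),
      v.getLast hv0, (List.dropLast_append_getLast hv0).symm⟩

lemma card_cfrIn_eq_one_add_sum_aext [Fintype A] (hpre : ∀ w a, w ++ [a] ∈ L → w ∈ L)
    (hext : ∀ w ∈ L, ∃ a, w ++ [a] ∈ L) (huL : u ∈ L) (hfin : (returnPrefixes L u).Finite) :
    Nat.card {u' // CFRin L u u'} = 1 + ∑ w ∈ hfin.toFinset, aext L w := by
  set P := hfin.toFinset
  set C := P.biUnion (rightExtensions L)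
  have hmemC : ∀ v, v ∈ C ↔ v ≠ u ∧ (v ∈ returnPrefixes L u ∨ CFRin L u v) := fun _ =>
    mem_biUnion_rightExtensions_iff hpre hfin
  have hR : {u' | CFRin L u u'} = ↑(C.filter (CFRin L u)) := by
    ext v
    simp only [Set.mem_ofPred_eq, Finset.coe_filter, hmemC]
    exact ⟨fun h => ⟨⟨h.2.pprefix.2.symm, Or.inr h⟩, h⟩, And.right⟩
  have hP : C.filter (¬ CFRin L u ·) = P.erase u := by
    ext v
    simp only [Finset.mem_filter, Finset.mem_erase, hmemC, P, Set.Finite.mem_toFinset]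
    exact ⟨fun ⟨⟨hvu, hv⟩, hc⟩ => ⟨hvu, hv.resolve_right hc⟩,
      fun ⟨hvu, hv⟩ => ⟨⟨hvu, Or.inl hv⟩, not_cfrIn_of_mem_returnPrefixes hv⟩⟩
  have hcard := Finset.card_filter_add_card_filter_not (s := C) (CFRin L u)
  have huP : u ∈ P := hfin.mem_toFinset.2 ⟨huL, List.prefix_refl u, occCount_self u⟩
  have hcardC : C.card = ∑ w ∈ P, (aext L w + 1) :=
    card_biUnion_rightExtensions hext fun w hw => (hfin.mem_toFinset.1 hw).1
  rw [hP, Finset.card_erase_of_mem huP, hcardC, Finset.sum_add_distrib, Finset.sum_const,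
    smul_eq_mul, mul_one] at hcard
  change Nat.card {u' | CFRin L u u'} = _
  rw [hR, Nat.card_coe_set_eq, Set.ncard_coe_finset]
  have := Finset.card_pos.2 ⟨u, huP⟩
  omega

lemma exists_cfrIn_of_mem_returnPrefixes (hpre : ∀ w a, w ++ [a] ∈ L → w ∈ L)
    (hext : ∀ w ∈ L, ∃ a, w ++ [a] ∈ L) {B : ℕ} (hB : ∀ v ∈ returnPrefixes L u, v.length ≤ B)
    {w : List A} (hw : w ∈ returnPrefixes L u) : ∃ u', CFRin L u u' ∧ PPrefix w u' := by
  obtain ⟨a, ha⟩ := hext w hw.1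
  have hpp : PPrefix w (w ++ [a]) := ⟨List.prefix_append w [a], by simp⟩
  rcases (append_singleton_mem_returnPrefixes_iff hpre hw.2.1 ha).1 hw with hwa | hwa
  · have hlen := hB _ hwa
    obtain ⟨u', hu', hpp'⟩ := exists_cfrIn_of_mem_returnPrefixes hpre hext hB hwa
    exact ⟨u', hu', hpp.trans hpp'⟩
  · exact ⟨w ++ [a], hwa, hpp⟩
termination_by B - w.length
decreasing_by have := hpp.length_lt; omega

lemma sset_eq_sep_returnPrefixes (hpre : ∀ w a, w ++ [a] ∈ L → w ∈ L)
    (hext : ∀ w ∈ L, ∃ a, w ++ [a] ∈ L) {B : ℕ} (hB : ∀ v ∈ returnPrefixes L u, v.length ≤ B) :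
    Sset L u = {r ∈ returnPrefixes L u | RightSpecial L r} := by
  ext r
  refine ⟨fun ⟨hr, u', hu', hur, hru'⟩ => ?_, fun ⟨hr, hrs⟩ => ?_⟩
  · exact ⟨⟨hr.1, hur, occCount_eq_one_of_isCFR hu'.2 hur hru'⟩, hr⟩
  obtain ⟨u', hu', hru'⟩ := exists_cfrIn_of_mem_returnPrefixes hpre hext hB hr
  exact ⟨hrs, u', hu', hr.2.1, hru'⟩

end Language

lemma IsMinimal.exists_length_bound_returnPrefixes [TopologicalSpace A] [DiscreteTopology A]
    [Finite A] {Ξ : Set (ℕ → A)} (hΞ : IsSubshift Ξ) (hmin : IsMinimal Ξ)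
    {u : List A} (hu : u ∈ language Ξ) :
    ∃ B, ∀ w ∈ returnPrefixes (language Ξ) u, w.length ≤ B := by
  obtain ⟨N, hN⟩ := hmin.exists_bound_factorAt hΞ hu
  refine ⟨u.length + N, fun w ⟨⟨ξ, hξ, k, hk⟩, hw, h1⟩ => ?_⟩
  -- `u` occurs again at some position `1 + j ≤ N` of `w`, inside `w` if `w` is long.
  obtain ⟨j, hj, hjk⟩ := hN ξ hξ (k + 1)
  by_contra! hlen
  have hocc : 1 + j ∈ occFinset u w := mem_occFinset.2
    ⟨by omega, prefix_drop_of_factorAt hk (by rwa [← add_assoc]) (by omega)⟩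
  have : 1 < occCount u w := by
    rw [occCount_eq_card_occFinset, Finset.one_lt_card]
    exact ⟨0, zero_mem_occFinset hw, 1 + j, hocc, by omega⟩
  omega

theorem statement7_general {A : Type*} [Fintype A] [DecidableEq A] [TopologicalSpace A]
    [DiscreteTopology A] (Ξ : Set (ℕ → A)) (hΞ : IsSubshift Ξ) (hmin : IsMinimal Ξ)
    (u : List A) (hu : IsPrivileged u) (huL : u ∈ language Ξ) :
    (atil (language Ξ) u = ∑ᶠ r ∈ Sset (language Ξ) u, aext (language Ξ) r) ∧
      (Sset (language Ξ) u).ncard ≤ atil (language Ξ) u := by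
  set L := language Ξ
  have hpre : ∀ w a, w ++ [a] ∈ L → w ∈ L := fun w a =>
    mem_language_of_prefix (List.prefix_append w [a])
  have hext : ∀ w ∈ L, ∃ a, w ++ [a] ∈ L := fun w => exists_append_singleton_mem_language
  obtain ⟨B, hB⟩ := hmin.exists_length_bound_returnPrefixes hΞ huL
  have hfin : (returnPrefixes L u).Finite := (List.finite_length_le A B).subset hB
  set S := hfin.toFinset.filter (RightSpecial L)
  have hS : Sset L u = S := by
    rw [sset_eq_sep_returnPrefixes hpre hext hB]
    ext r
    simp [S]
  have hatil : atil L u = ∑ r ∈ S, aext L r := by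
    rw [atil, if_pos hu, card_cfrIn_eq_one_add_sum_aext hpre hext huL hfin, Nat.add_sub_cancel_left,
      Finset.sum_filter_of_ne]
    intro w hw hw0
    exact (rightSpecial_iff_one_le_aext (hfin.mem_toFinset.1 hw).1).2 (Nat.one_le_iff_ne_zero.2 hw0)
  rw [hS, finsum_mem_coe_finset, Set.ncard_coe_finset, hatil]
  refine ⟨rfl, ?_⟩
  simpa using Finset.card_nsmul_le_sum S _ 1 fun r hr =>
    (rightSpecial_iff_one_le_aext (Finset.mem_filter.1 hr).2.1).1 (Finset.mem_filter.1 hr).2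

/-- For every privileged word `u` of the language of a minimal and
aperiodic right-infinite subshift, `ã(u) = Σ_{r ∈ S(u)} a(r)`; in particular the
cardinality of `S(u)` is at most `ã(u)`. -/
theorem statement7 {A : Type*} [Fintype A] [DecidableEq A] [TopologicalSpace A]
    [DiscreteTopology A] (Ξ : Set (ℕ → A)) (hΞ : IsSubshift Ξ) (hmin : IsMinimal Ξ)
    (hap : Aperiodic Ξ) (u : List A) (hu : IsPrivileged u) (huL : u ∈ language Ξ) :
    (atil (language Ξ) u = ∑ᶠ r ∈ Sset (language Ξ) u, aext (language Ξ) r) ∧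
      (Sset (language Ξ) u).ncard ≤ atil (language Ξ) u :=
  statement7_general Ξ hΞ hmin u hu huL

end Arx1111
end
end
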